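/- Suppose γ ≥ 0 is a real constant such that for every metric space (X,d), every nonempty finite set P ⊆ X, every integer k ≥ 1, every δ > 0, every δ-cover Q ⊆ P with k ≤ |Q|, and every valid farthest-first output C on Q with k centers, one has cost(C,P) ≤ 2·OPT(P,k) + γ·δ. Then γ ≥ 1. -/

import Mathlib

/-!
On the real line take `P = {0, ε, 1}`, its `1`-cover `Q = {0, ε}` and `k = 2`. Farthest-first
on `Q` returns `Q` itself, which leaves the point `1` at distance `1 - ε`, whereas the centers
`{0, 1}` serve `P` at cost `ε`. Hence `1 - ε ≤ 2ε + γ` for every small `ε > 0`, so `γ ≥ 1`.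
-/

/-- `setDist s C` is the distance from the point `s` to the set `C`,
i.e. the infimum (for nonempty finite `C`, the minimum) of `dist s c` over `c ∈ C`. -/
noncomputable def setDist {X : Type*} [MetricSpace X] (s : X) (C : Set X) : ℝ :=
  sInf ((fun c => dist s c) '' C)

/-- `cost C S` is the supremum (for nonempty finite `S`, the maximum) over `s ∈ S`
of the distance from `s` to the center set `C`. -/
noncomputable def cost {X : Type*} [MetricSpace X] (C S : Set X) : ℝ :=
  sSup ((fun s => setDist s C) '' S)

/-- `kOPT P k` is the optimal `k`-center cost on the finite set `P`. -/
noncomputable def kOPT {X : Type*} [MetricSpace X] (P : Finset X) (k : ℕ) : ℝ :=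
  sInf { r : ℝ | ∃ C : Finset X, C ⊆ P ∧ C.card = k ∧ cost (C : Set X) (P : Set X) = r }

/-- `IsFF S k C` : `C` is a valid farthest-first output on `S` with `k` centers. -/
def IsFF {X : Type*} [MetricSpace X] (S : Finset X) (k : ℕ) (C : Finset X) : Prop :=
  ∃ c : Fin k → X, Function.Injective c ∧ (∀ i, c i ∈ S) ∧
    (↑C : Set X) = Set.range c ∧
    ∀ i : Fin k, 0 < (i : ℕ) → ∀ s ∈ S,
      setDist s (c '' {j | j < i}) ≤ setDist (c i) (c '' {j | j < i})

section

variable {X : Type*} [MetricSpace X]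

lemma setDist_nonneg (s : X) (C : Set X) : 0 ≤ setDist s C :=
  Real.sInf_nonneg (by rintro _ ⟨c, _, rfl⟩; exact dist_nonneg)

lemma setDist_le_dist {s c : X} {C : Set X} (hc : c ∈ C) : setDist s C ≤ dist s c :=
  csInf_le ⟨0, by rintro _ ⟨c', _, rfl⟩; exact dist_nonneg⟩ ⟨c, hc, rfl⟩

lemma le_setDist {s : X} {C : Set X} (hC : C.Nonempty) {r : ℝ}
    (h : ∀ c ∈ C, r ≤ dist s c) : r ≤ setDist s C :=
  le_csInf (hC.image _) (by rintro _ ⟨c, hc, rfl⟩; exact h c hc)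

lemma setDist_singleton (s c : X) : setDist s {c} = dist s c := by
  rw [setDist, Set.image_singleton, csInf_singleton]

lemma cost_nonneg (C S : Set X) : 0 ≤ cost C S :=
  Real.sSup_nonneg (by rintro _ ⟨s, _, rfl⟩; exact setDist_nonneg s C)

lemma cost_le {C S : Set X} (hS : S.Nonempty) {r : ℝ}
    (h : ∀ s ∈ S, setDist s C ≤ r) : cost C S ≤ r :=
  csSup_le (hS.image _) (by rintro _ ⟨s, hs, rfl⟩; exact h s hs)

lemma setDist_le_cost {C S : Set X} (hS : S.Finite) {s : X} (hs : s ∈ S) :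
    setDist s C ≤ cost C S :=
  le_csSup (hS.image _).bddAbove ⟨s, hs, rfl⟩

lemma kOPT_le_cost {P C : Finset X} {k : ℕ} (hCP : C ⊆ P) (hC : C.card = k) :
    kOPT P k ≤ cost (C : Set X) (P : Set X) :=
  csInf_le ⟨0, by rintro _ ⟨C', _, _, rfl⟩; exact cost_nonneg _ _⟩ ⟨C, hCP, hC, rfl⟩

lemma isFF_pair [DecidableEq X] {S : Finset X} {a b : X} (ha : a ∈ S) (hb : b ∈ S)
    (hab : a ≠ b) (hfar : ∀ s ∈ S, dist s a ≤ dist b a) : IsFF S 2 {a, b} := by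
  refine ⟨![a, b], ?_, Fin.forall_fin_two.2 ⟨ha, hb⟩, ?_, ?_⟩
  · intro i j hij
    fin_cases i <;> fin_cases j <;> simp_all [eq_comm]
  · simp [Set.pair_comm]
  · intro i hi s hs
    obtain rfl : i = 1 := Fin.ext (by omega)
    have hfirst : ![a, b] '' {j | j < 1} = {a} := by
      rw [show {j : Fin 2 | j < 1} = {0} by ext j; fin_cases j <;> simp, Set.image_singleton]
      rfl
    simpa [hfirst, setDist_singleton] using hfar s hs

end

section ThreePoints

variable {ε : ℝ}

lemma one_sub_le_cost_pair (hε : 0 ≤ ε) :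
    1 - ε ≤ cost (({0, ε} : Finset ℝ) : Set ℝ) (({0, ε, 1} : Finset ℝ) : Set ℝ) := by
  calc 1 - ε ≤ setDist 1 (({0, ε} : Finset ℝ) : Set ℝ) := by
        refine le_setDist (by simp) fun c hc => ?_
        simp only [Finset.coe_insert, Finset.coe_singleton, Set.mem_insert_iff,
          Set.mem_singleton_iff] at hc
        rcases hc with rfl | rfl <;> rw [Real.dist_eq]
        · rw [sub_zero, abs_one]; linarith
        · exact le_abs_self _
    _ ≤ _ := setDist_le_cost (Finset.finite_toSet _) (by simp)

lemma kOPT_triple_le (hε : 0 ≤ ε) : kOPT ({0, ε, 1} : Finset ℝ) 2 ≤ ε := by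
  calc kOPT ({0, ε, 1} : Finset ℝ) 2
      ≤ cost (({0, 1} : Finset ℝ) : Set ℝ) (({0, ε, 1} : Finset ℝ) : Set ℝ) :=
        kOPT_le_cost (by intro x; simp only [Finset.mem_insert, Finset.mem_singleton]; tauto)
          (by simp)
    _ ≤ ε := by
        refine cost_le (by simp) fun s hs => ?_
        simp only [Finset.coe_insert, Finset.coe_singleton, Set.mem_insert_iff,
          Set.mem_singleton_iff] at hs
        rcases hs with rfl | rfl | rfl
        · exact (setDist_le_dist (c := 0) (by simp)).trans (by simpa using hε)
        · exact (setDist_le_dist (c := 0) (by simp)).trans (by simp [abs_of_nonneg hε])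
        · exact (setDist_le_dist (c := 1) (by simp)).trans (by simpa using hε)

lemma isFF_zero_pair (hε : 0 < ε) : IsFF ({0, ε} : Finset ℝ) 2 {0, ε} :=
  isFF_pair (by simp) (by simp) hε.ne fun s hs => by
    simp only [Finset.mem_insert, Finset.mem_singleton] at hs
    rcases hs with rfl | rfl <;> simp [abs_of_pos hε, hε.le]

end ThreePoints

/-- If a constant `γ ≥ 0` satisfies the universal bound
`cost(FF(Q),P) ≤ 2·OPT(P,k) + γ·δ` over all metric spaces, nonempty finite sets `P`,
integers `k ≥ 1`, reals `δ > 0`, `δ`-covers `Q ⊆ P` with `k ≤ |Q|`, and valid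
farthest-first outputs `C` on `Q` with `k` centers, then `γ ≥ 1`. -/
theorem stmt_4 (γ : ℝ) (hγ : 0 ≤ γ)
    (H : ∀ (X : Type) [MetricSpace X] (P Q C : Finset X) (k : ℕ) (δ : ℝ),
      P.Nonempty → 1 ≤ k → 0 < δ → Q ⊆ P →
      (∀ p ∈ P, ∃ q ∈ Q, dist p q ≤ δ) → k ≤ Q.card →
      IsFF Q k C → cost (C : Set X) (P : Set X) ≤ 2 * kOPT P k + γ * δ) :
    1 ≤ γ := by
  by_contra! hlt
  set ε := (1 - γ) / 6 with hε_def
  have hε : 0 < ε := by positivity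
  have hε1 : ε ≤ 1 := by linarith
  have hQP : ({0, ε} : Finset ℝ) ⊆ {0, ε, 1} := by
    intro x; simp only [Finset.mem_insert, Finset.mem_singleton]; tauto
  have hcover : ∀ p ∈ ({0, ε, 1} : Finset ℝ), ∃ q ∈ ({0, ε} : Finset ℝ), dist p q ≤ 1 := by
    intro p hp
    refine ⟨0, by simp, ?_⟩
    simp only [Finset.mem_insert, Finset.mem_singleton] at hp
    rcases hp with rfl | rfl | rfl <;> simp [abs_of_pos hε, hε1]
  have hbound := H ℝ {0, ε, 1} {0, ε} {0, ε} 2 1 (by simp) one_le_two one_pos hQP hcover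
    (by simp [Finset.card_pair hε.ne]) (isFF_zero_pair hε)
  linarith [one_sub_le_cost_pair hε.le, kOPT_triple_le hε.le]
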